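/- arXiv:2204.03308 — 6 statements merged into one kernel-verified Lean document; each statement's English description precedes it below -/
import Mathlib

section
/- Let G be an r-regular finite simple graph on vertex set V and let S ⊆ V. Let a and d be real numbers with a + d < 2r such that every vertex x ∈ S has at most a neighbors in S and every vertex y ∈ V∖S has at least d neighbors in V∖S. Then |S|/|V| ≤ (r−d)/(2r−a−d). Moreover, if S and V∖S are nonempty and |S|/|V| = (r−d)/(2r−a−d), then {S, V∖S} is an equitable partition with quotient matrix ((a, r−a), (r−d, d)): every vertex of S has exactly a neighbors in S and r−a neighbors in V∖S, and every vertex of V∖S has exactly r−d neighbors in S and d neighbors in V∖S. -/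
open Finset
open scoped Classical

/-- Bound on the density of a set `S` with internal degree at most `a` whose
complement has internal degree at least `d`; equality forces an equitable
partition with quotient matrix `((a, r-a), (r-d, d))`. -/
theorem density_bound_and_equitable
    {V : Type*} [Fintype V] [Nonempty V]
    (G : SimpleGraph V) [DecidableRel G.Adj]
    (r : ℕ) (hreg : G.IsRegularOfDegree r)
    (S : Finset V) (a d : ℝ) (had : a + d < 2 * (r : ℝ))
    (ha : ∀ x ∈ S, ((S.filter fun y => G.Adj x y).card : ℝ) ≤ a)
    (hd : ∀ y ∈ Sᶜ, d ≤ ((Sᶜ.filter fun z => G.Adj y z).card : ℝ)) :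
    (S.card : ℝ) / Fintype.card V ≤ ((r : ℝ) - d) / (2 * (r : ℝ) - a - d) ∧
    (S.Nonempty → Sᶜ.Nonempty →
      (S.card : ℝ) / Fintype.card V = ((r : ℝ) - d) / (2 * (r : ℝ) - a - d) →
      ((∀ x ∈ S, ((S.filter fun y => G.Adj x y).card : ℝ) = a ∧
                 ((Sᶜ.filter fun y => G.Adj x y).card : ℝ) = (r : ℝ) - a) ∧
       (∀ x ∈ Sᶜ, ((S.filter fun y => G.Adj x y).card : ℝ) = (r : ℝ) - d ∧
                  ((Sᶜ.filter fun y => G.Adj x y).card : ℝ) = d))) := by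
  classical
  have key : ∀ x : V, (S.filter fun y => G.Adj x y).card
      + (Sᶜ.filter fun y => G.Adj x y).card = r := by
    intro x
    rw [← Finset.card_union_of_disjoint
      (Finset.disjoint_filter_filter disjoint_compl_right),
      ← Finset.filter_union, Finset.union_compl]
    have : Finset.univ.filter (fun y => G.Adj x y) = G.neighborFinset x := by
      ext y; simp [SimpleGraph.mem_neighborFinset]
    rw [this]
    exact hreg x
  have keyR : ∀ x : V, ((S.filter fun y => G.Adj x y).card : ℝ)
      + ((Sᶜ.filter fun y => G.Adj x y).card : ℝ) = (r : ℝ) := by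
    intro x; exact_mod_cast key x
  have count : ∑ x ∈ S, (Sᶜ.filter fun y => G.Adj x y).card
      = ∑ y ∈ Sᶜ, (S.filter fun z => G.Adj y z).card := by
    simp_rw [Finset.card_filter]
    rw [Finset.sum_comm]
    refine Finset.sum_congr rfl fun y _ => Finset.sum_congr rfl fun x _ => ?_
    exact if_congr (G.adj_comm x y) rfl rfl
  have hE : ∑ x ∈ S, ((Sᶜ.filter fun y => G.Adj x y).card : ℝ)
      = ∑ y ∈ Sᶜ, ((S.filter fun z => G.Adj y z).card : ℝ) := by
    exact_mod_cast count
  have hterm1 : ∀ x ∈ S, (r : ℝ) - a ≤ ((Sᶜ.filter fun y => G.Adj x y).card : ℝ) := by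
    intro x hx
    have h1 := keyR x
    have h2 := ha x hx
    linarith
  have hterm2 : ∀ y ∈ Sᶜ, ((S.filter fun z => G.Adj y z).card : ℝ) ≤ (r : ℝ) - d := by
    intro y hy
    have h1 := keyR y
    have h2 := hd y hy
    linarith
  have hsum1 : (S.card : ℝ) * ((r : ℝ) - a)
      ≤ ∑ x ∈ S, ((Sᶜ.filter fun y => G.Adj x y).card : ℝ) := by
    calc (S.card : ℝ) * ((r : ℝ) - a) = ∑ _x ∈ S, ((r : ℝ) - a) := by
          rw [Finset.sum_const, nsmul_eq_mul]
      _ ≤ _ := Finset.sum_le_sum hterm1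
  have hsum2 : ∑ y ∈ Sᶜ, ((S.filter fun z => G.Adj y z).card : ℝ)
      ≤ (Sᶜ.card : ℝ) * ((r : ℝ) - d) := by
    calc ∑ y ∈ Sᶜ, ((S.filter fun z => G.Adj y z).card : ℝ)
        ≤ ∑ _y ∈ Sᶜ, ((r : ℝ) - d) := Finset.sum_le_sum hterm2
      _ = _ := by rw [Finset.sum_const, nsmul_eq_mul]
  have hcompl : ((Sᶜ.card : ℝ)) = (Fintype.card V : ℝ) - S.card := by
    rw [Finset.card_compl, Nat.cast_sub (Finset.card_le_univ S)]
  rw [hcompl] at hsum2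
  have hn0 : (0 : ℝ) < Fintype.card V := by
    exact_mod_cast Fintype.card_pos
  have hden : (0 : ℝ) < 2 * (r : ℝ) - a - d := by linarith
  have hmain : (S.card : ℝ) * ((r : ℝ) - a) ≤ ((Fintype.card V : ℝ) - S.card) * ((r : ℝ) - d) := by
    calc (S.card : ℝ) * ((r : ℝ) - a) ≤ _ := hsum1
      _ = _ := hE
      _ ≤ _ := hsum2
  constructor
  · rw [div_le_div_iff₀ hn0 hden]
    nlinarith [hmain]
  · intro _ _ heq
    rw [div_eq_div_iff hn0.ne' hden.ne'] at heq
    have hEq : (S.card : ℝ) * ((r : ℝ) - a) = ((Fintype.card V : ℝ) - S.card) * ((r : ℝ) - d) := by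
      nlinarith [heq]
    have hE1 : ∑ x ∈ S, ((Sᶜ.filter fun y => G.Adj x y).card : ℝ)
        = (S.card : ℝ) * ((r : ℝ) - a) := by
      linarith [hE, hsum1, hsum2, hEq]
    have hE2 : ∑ y ∈ Sᶜ, ((S.filter fun z => G.Adj y z).card : ℝ)
        = ((Fintype.card V : ℝ) - S.card) * ((r : ℝ) - d) := by
      linarith [hE, hsum1, hsum2, hEq]
    have hall1 : ∀ x ∈ S, ((Sᶜ.filter fun y => G.Adj x y).card : ℝ) = (r : ℝ) - a := by
      intro x hx
      by_contra hne
      have hlt : (r : ℝ) - a < ((Sᶜ.filter fun y => G.Adj x y).card : ℝ) :=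
        lt_of_le_of_ne (hterm1 x hx) (Ne.symm hne)
      have : (S.card : ℝ) * ((r : ℝ) - a)
          < ∑ x ∈ S, ((Sᶜ.filter fun y => G.Adj x y).card : ℝ) := by
        have := Finset.sum_lt_sum (f := fun _ => (r : ℝ) - a)
          (g := fun x => ((Sᶜ.filter fun y => G.Adj x y).card : ℝ))
          hterm1 ⟨x, hx, hlt⟩
        rwa [Finset.sum_const, nsmul_eq_mul] at this
      linarith [hE1]
    have hall2 : ∀ y ∈ Sᶜ, ((S.filter fun z => G.Adj y z).card : ℝ) = (r : ℝ) - d := by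
      intro y hy
      by_contra hne
      have hlt : ((S.filter fun z => G.Adj y z).card : ℝ) < (r : ℝ) - d :=
        lt_of_le_of_ne (hterm2 y hy) hne
      have : ∑ y ∈ Sᶜ, ((S.filter fun z => G.Adj y z).card : ℝ)
          < ((Fintype.card V : ℝ) - S.card) * ((r : ℝ) - d) := by
        have := Finset.sum_lt_sum (f := fun y => ((S.filter fun z => G.Adj y z).card : ℝ))
          (g := fun _ => (r : ℝ) - d) hterm2 ⟨y, hy, hlt⟩
        rwa [Finset.sum_const, nsmul_eq_mul, hcompl] at this
      linarith [hE2]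
    constructor
    · intro x hx
      have h1 := hall1 x hx
      have h2 := keyR x
      constructor <;> linarith
    · intro y hy
      have h1 := hall2 y hy
      have h2 := keyR y
      constructor <;> linarith
end

section
/- Let G be an r-regular finite simple graph on vertex set V with at least one edge, let λ_min be the minimum eigenvalue of its adjacency matrix M, let S ⊆ V be nonempty with V∖S nonempty, and let a be a real number. If σ(S) ≤ a, then |S| ≤ (a−λ_min)|V|/(r−λ_min). Moreover, |S| = (a−λ_min)|V|/(r−λ_min) if and only if {S, V∖S} is an equitable partition with quotient matrix ((a, r−a), (a−λ_min, r+λ_min−a)). -/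
/-!
`M - λ_min • 1` is positive semidefinite. Its quadratic form at `f = n • 𝟙_S - |S| • 𝟙`, which is
orthogonal to the all-ones eigenvector of the regular graph, equals
`n (n e(S) - r |S|² - λ_min |S| (n - |S|))`, where `e(S) = ∑_{x ∈ S} |N(x) ∩ S| ≤ a |S|`; this gives
the bound. In the equality case the form vanishes at `f`, so `f` is a `λ_min`-eigenvector, and
`(M f)(x) = λ_min f(x)` read at `x ∈ S` and `x ∉ S` is the equitable partition. An edge `xy` gives
`λ_min ≤ -1` (test `e_x - e_y`), so `r - λ_min > 0`.
-/

open Finset Matrix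
open scoped Classical

theorem Matrix.posSemidef_sub_smul_one_of_forall_le_eigenvalue {n : Type*} [Fintype n]
    {M : Matrix n n ℝ} (hM : M.IsHermitian) {c : ℝ}
    (hc : ∀ μ : ℝ, (∃ g : n → ℝ, g ≠ 0 ∧ M *ᵥ g = μ • g) → c ≤ μ) :
    (M - c • 1).PosSemidef := by
  have hN : (M - c • 1).IsHermitian := hM.sub (by simp [IsHermitian])
  refine hN.posSemidef_iff_eigenvalues_nonneg.mpr fun i => ?_
  have hv := hN.mulVec_eigenvectorBasis i
  rw [sub_mulVec, smul_mulVec, one_mulVec, sub_eq_iff_eq_add, ← add_smul] at hv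
  have hne : ⇑(hN.eigenvectorBasis i) ≠ 0 := fun h =>
    hN.eigenvectorBasis.orthonormal.ne_zero i (by ext x; exact congrFun h x)
  exact sub_nonneg.1 (by simpa using hc _ ⟨_, hne, hv⟩)

section

variable {V : Type*}

noncomputable def indicatorVec (S : Finset V) : V → ℝ := fun x => if x ∈ S then 1 else 0

/-- `n = |V|` times the component of `𝟙_S` orthogonal to the all-ones vector. -/
noncomputable def balancedIndicator [Fintype V] (S : Finset V) : V → ℝ :=
  (Fintype.card V : ℝ) • indicatorVec S - (#S : ℝ) • 1

theorem indicatorVec_dotProduct [Fintype V] (S : Finset V) (w : V → ℝ) :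
    indicatorVec S ⬝ᵥ w = ∑ x ∈ S, w x := by
  simp [indicatorVec, dotProduct]

theorem balancedIndicator_apply [Fintype V] (S : Finset V) (x : V) :
    balancedIndicator S x = Fintype.card V * (if x ∈ S then 1 else 0) - #S := by
  simp [balancedIndicator, indicatorVec]

end

namespace SimpleGraph

variable {V : Type*} [Fintype V] (G : SimpleGraph V) [DecidableRel G.Adj]

theorem le_neg_one_of_posSemidef_adjMatrix_sub_smul_one {c : ℝ}
    (h : (G.adjMatrix ℝ - c • 1).PosSemidef) {x y : V} (hxy : G.Adj x y) : c ≤ -1 := by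
  set v : V → ℝ := Pi.single x 1 - Pi.single y 1
  have hv : star v ⬝ᵥ (G.adjMatrix ℝ - c • 1) *ᵥ v = -2 - 2 * c := by
    simp [v, hxy, hxy.symm, hxy.ne, hxy.ne', mulVec_sub, dotProduct_sub, sub_dotProduct]
    ring
  linarith [h.dotProduct_mulVec_nonneg v]

theorem adjMatrix_mulVec_indicatorVec (S : Finset V) :
    G.adjMatrix ℝ *ᵥ indicatorVec S = fun x => (#{y ∈ S | G.Adj x y} : ℝ) := by
  ext x
  simp [indicatorVec, inter_comm, neighborFinset_eq_filter, inter_filter]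

theorem card_filter_adj_add_card_filter_adj_compl (S : Finset V) (x : V) :
    #{y ∈ S | G.Adj x y} + #{y ∈ Sᶜ | G.Adj x y} = G.degree x := by
  rw [← card_union_of_disjoint (disjoint_filter_filter disjoint_compl_right), ← filter_union,
    union_compl, ← card_neighborFinset_eq_degree, neighborFinset_eq_filter]

namespace IsRegularOfDegree

variable {G} {r : ℕ}

theorem adjMatrix_mulVec_one (hreg : G.IsRegularOfDegree r) :
    G.adjMatrix ℝ *ᵥ 1 = (r : ℝ) • 1 := by
  ext x
  simp [hreg.degree_eq x]

theorem sum_card_filter_adj (hreg : G.IsRegularOfDegree r) (S : Finset V) :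
    ∑ x, (#{y ∈ S | G.Adj x y} : ℝ) = r * #S := by
  calc ∑ x, (#{y ∈ S | G.Adj x y} : ℝ) = 1 ⬝ᵥ G.adjMatrix ℝ *ᵥ indicatorVec S := by
        rw [adjMatrix_mulVec_indicatorVec, one_dotProduct]
    _ = (G.adjMatrix ℝ *ᵥ 1) ⬝ᵥ indicatorVec S := by
        rw [dotProduct_mulVec, ← mulVec_transpose, transpose_adjMatrix]
    _ = r * #S := by
        rw [hreg.adjMatrix_mulVec_one, smul_dotProduct, dotProduct_comm, indicatorVec_dotProduct]
        simp

theorem card_filter_adj_compl (hreg : G.IsRegularOfDegree r) (S : Finset V) (x : V) :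
    (#{y ∈ Sᶜ | G.Adj x y} : ℝ) = r - #{y ∈ S | G.Adj x y} := by
  rw [← hreg.degree_eq x, ← G.card_filter_adj_add_card_filter_adj_compl S x]
  push_cast
  ring

theorem card_mul_add_card_compl_mul_eq (hreg : G.IsRegularOfDegree r) {S : Finset V} {p q : ℝ}
    (hin : ∀ x ∈ S, (#{y ∈ S | G.Adj x y} : ℝ) = p)
    (hout : ∀ x ∈ Sᶜ, (#{y ∈ S | G.Adj x y} : ℝ) = q) :
    #S * p + (Fintype.card V - #S) * q = r * #S := by
  rw [← hreg.sum_card_filter_adj S, ← sum_add_sum_compl S, sum_congr rfl hin, sum_congr rfl hout,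
    sum_const, sum_const, card_compl, nsmul_eq_mul, nsmul_eq_mul, Nat.cast_sub (card_le_univ S)]

theorem adjMatrix_mulVec_balancedIndicator_apply (hreg : G.IsRegularOfDegree r) (S : Finset V)
    (x : V) :
    (G.adjMatrix ℝ *ᵥ balancedIndicator S) x =
      Fintype.card V * #{y ∈ S | G.Adj x y} - r * #S := by
  rw [balancedIndicator, mulVec_sub, mulVec_smul, mulVec_smul, adjMatrix_mulVec_indicatorVec,
    hreg.adjMatrix_mulVec_one]
  simp only [Pi.sub_apply, Pi.smul_apply, Pi.one_apply, smul_eq_mul, mul_one]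
  ring

theorem balancedIndicator_dotProduct_mulVec (hreg : G.IsRegularOfDegree r) (S : Finset V)
    (c : ℝ) :
    balancedIndicator S ⬝ᵥ (G.adjMatrix ℝ - c • 1) *ᵥ balancedIndicator S =
      Fintype.card V * (Fintype.card V * ∑ x ∈ S, (#{y ∈ S | G.Adj x y} : ℝ)
        - r * #S ^ 2 - c * #S * (Fintype.card V - #S)) := by
  have hχ : indicatorVec S ⬝ᵥ indicatorVec S = #S := by
    simp [indicatorVec_dotProduct, indicatorVec]
  have hsum : ∑ x, indicatorVec S x = #S := by simp [indicatorVec]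
  simp only [balancedIndicator, mulVec_sub, mulVec_smul, sub_mulVec, adjMatrix_mulVec_indicatorVec,
    smul_mulVec, one_mulVec, hreg.adjMatrix_mulVec_one, dotProduct_sub, dotProduct_smul,
    sub_dotProduct, smul_dotProduct, indicatorVec_dotProduct, smul_eq_mul, one_dotProduct,
    hreg.sum_card_filter_adj, hχ, hsum, Pi.one_apply, sum_const, nsmul_eq_mul, mul_one, card_univ]
  ring

theorem hoffman_inequality [Nonempty V] (hreg : G.IsRegularOfDegree r) {c : ℝ}
    (hc : (G.adjMatrix ℝ - c • 1).PosSemidef) (S : Finset V) :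
    r * #S ^ 2 + c * #S * (Fintype.card V - #S) ≤
      Fintype.card V * ∑ x ∈ S, (#{y ∈ S | G.Adj x y} : ℝ) := by
  have hq := hc.dotProduct_mulVec_nonneg (balancedIndicator S)
  rw [star_trivial, hreg.balancedIndicator_dotProduct_mulVec] at hq
  have hn : (0 : ℝ) < Fintype.card V := by exact_mod_cast Fintype.card_pos
  linarith [(mul_nonneg_iff_of_pos_left hn).1 hq]

theorem adjMatrix_mulVec_balancedIndicator_eq_smul_of_eq (hreg : G.IsRegularOfDegree r) {c : ℝ}
    (hc : (G.adjMatrix ℝ - c • 1).PosSemidef) (S : Finset V)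
    (h : Fintype.card V * ∑ x ∈ S, (#{y ∈ S | G.Adj x y} : ℝ) =
      r * #S ^ 2 + c * #S * (Fintype.card V - #S)) :
    G.adjMatrix ℝ *ᵥ balancedIndicator S = c • balancedIndicator S := by
  have h0 : star (balancedIndicator S) ⬝ᵥ (G.adjMatrix ℝ - c • 1) *ᵥ balancedIndicator S = 0 := by
    rw [star_trivial, hreg.balancedIndicator_dotProduct_mulVec, h]
    ring
  have h1 := (hc.dotProduct_mulVec_zero_iff _).1 h0
  rwa [sub_mulVec, smul_mulVec, one_mulVec, sub_eq_zero] at h1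

theorem card_filter_adj_of_adjMatrix_mulVec_balancedIndicator_eq_smul [Nonempty V]
    (hreg : G.IsRegularOfDegree r) {S : Finset V} {c a : ℝ}
    (h : G.adjMatrix ℝ *ᵥ balancedIndicator S = c • balancedIndicator S)
    (ha : #S * (r - c) = (a - c) * Fintype.card V) :
    (∀ x ∈ S, (#{y ∈ S | G.Adj x y} : ℝ) = a) ∧ ∀ x ∉ S, (#{y ∈ S | G.Adj x y} : ℝ) = a - c := by
  have hn : (0 : ℝ) < Fintype.card V := by exact_mod_cast Fintype.card_pos
  refine ⟨fun x hx => ?_, fun x hx => ?_⟩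
  · have hx' := congrFun h x
    rw [hreg.adjMatrix_mulVec_balancedIndicator_apply, Pi.smul_apply, balancedIndicator_apply,
      if_pos hx] at hx'
    exact mul_left_cancel₀ hn.ne' (by linear_combination hx' + ha)
  · have hx' := congrFun h x
    rw [hreg.adjMatrix_mulVec_balancedIndicator_apply, Pi.smul_apply, balancedIndicator_apply,
      if_neg hx] at hx'
    exact mul_left_cancel₀ hn.ne' (by linear_combination hx' + ha)

end IsRegularOfDegree

end SimpleGraph

theorem hoffman_type_bound_average_internal_degree_general
    {V : Type*} [Fintype V] (G : SimpleGraph V) [DecidableRel G.Adj]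
    (r : ℕ) (hreg : G.IsRegularOfDegree r)
    (hedge : ∃ x y, G.Adj x y)
    (lmin : ℝ)
    (hleast : ∀ μ : ℝ,
      (∃ g : V → ℝ, g ≠ 0 ∧ (G.adjMatrix ℝ).mulVec g = μ • g) → lmin ≤ μ)
    (S : Finset V) (hS : S.Nonempty)
    (a : ℝ)
    (hsigma : (∑ x ∈ S, ((S.filter fun y => G.Adj x y).card : ℝ)) / S.card ≤ a) :
    (S.card : ℝ) ≤ (a - lmin) * Fintype.card V / ((r : ℝ) - lmin) ∧
    ((S.card : ℝ) = (a - lmin) * Fintype.card V / ((r : ℝ) - lmin) ↔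
      ((∀ x ∈ S, ((S.filter fun y => G.Adj x y).card : ℝ) = a ∧
                 ((Sᶜ.filter fun y => G.Adj x y).card : ℝ) = (r : ℝ) - a) ∧
       (∀ x ∈ Sᶜ, ((S.filter fun y => G.Adj x y).card : ℝ) = a - lmin ∧
                  ((Sᶜ.filter fun y => G.Adj x y).card : ℝ) = (r : ℝ) + lmin - a))) := by
  obtain ⟨x₀, y₀, hxy⟩ := hedge
  have : Nonempty V := ⟨x₀⟩
  have hpsd : (G.adjMatrix ℝ - lmin • 1).PosSemidef :=
    posSemidef_sub_smul_one_of_forall_le_eigenvalue (isHermitian_iff_isSymm.2 G.isSymm_adjMatrix)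
      hleast
  have hr : 0 < (r : ℝ) - lmin := by
    linarith [G.le_neg_one_of_posSemidef_adjMatrix_sub_smul_one hpsd hxy, r.cast_nonneg (α := ℝ)]
  have hs : (0 : ℝ) < #S := by exact_mod_cast hS.card_pos
  have hn : (0 : ℝ) < Fintype.card V := by exact_mod_cast Fintype.card_pos
  have he : ∑ x ∈ S, (#{y ∈ S | G.Adj x y} : ℝ) ≤ a * #S := (div_le_iff₀ hs).1 hsigma
  have hhoff := hreg.hoffman_inequality hpsd S
  have hineq : r * #S ^ 2 + lmin * #S * (Fintype.card V - #S) ≤ Fintype.card V * (a * #S) :=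
    hhoff.trans (by gcongr)
  refine ⟨?_, fun heq => ?_, fun ⟨hin, hout⟩ => ?_⟩
  · rw [le_div_iff₀ hr]
    exact le_of_mul_le_mul_left (by linarith) hs
  · rw [eq_div_iff hr.ne'] at heq
    have he' : ∑ x ∈ S, (#{y ∈ S | G.Adj x y} : ℝ) = a * #S :=
      le_antisymm he (le_of_mul_le_mul_left (by linear_combination hhoff - #S * heq) hn)
    obtain ⟨hin, hout⟩ := hreg.card_filter_adj_of_adjMatrix_mulVec_balancedIndicator_eq_smul
      (hreg.adjMatrix_mulVec_balancedIndicator_eq_smul_of_eq hpsd S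
        (by rw [he']; linear_combination -#S * heq)) heq
    refine ⟨fun x hx => ⟨hin x hx, ?_⟩, fun x hx => ⟨hout x (mem_compl.1 hx), ?_⟩⟩
    · rw [hreg.card_filter_adj_compl, hin x hx]
    · rw [hreg.card_filter_adj_compl, hout x (mem_compl.1 hx)]
      ring
  · rw [eq_div_iff hr.ne']
    linear_combination
      -hreg.card_mul_add_card_compl_mul_eq (fun x hx => (hin x hx).1) fun x hx => (hout x hx).1

/-- If the average internal degree of `S` is at most `a`, then
`|S| ≤ (a - λ_min)|V|/(r - λ_min)`, with equality iff `{S, Sᶜ}` is an equitable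
partition with quotient matrix `((a, r-a), (a-λ_min, r+λ_min-a))`. -/
theorem hoffman_type_bound_average_internal_degree
    {V : Type*} [Fintype V] (G : SimpleGraph V) [DecidableRel G.Adj]
    (r : ℕ) (hreg : G.IsRegularOfDegree r)
    (hedge : ∃ x y, G.Adj x y)
    (lmin : ℝ)
    (hmin : ∃ g : V → ℝ, g ≠ 0 ∧ (G.adjMatrix ℝ).mulVec g = lmin • g)
    (hleast : ∀ μ : ℝ,
      (∃ g : V → ℝ, g ≠ 0 ∧ (G.adjMatrix ℝ).mulVec g = μ • g) → lmin ≤ μ)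
    (S : Finset V) (hS : S.Nonempty) (hSc : Sᶜ.Nonempty)
    (a : ℝ)
    (hsigma : (∑ x ∈ S, ((S.filter fun y => G.Adj x y).card : ℝ)) / S.card ≤ a) :
    (S.card : ℝ) ≤ (a - lmin) * Fintype.card V / ((r : ℝ) - lmin) ∧
    ((S.card : ℝ) = (a - lmin) * Fintype.card V / ((r : ℝ) - lmin) ↔
      ((∀ x ∈ S, ((S.filter fun y => G.Adj x y).card : ℝ) = a ∧
                 ((Sᶜ.filter fun y => G.Adj x y).card : ℝ) = (r : ℝ) - a) ∧
       (∀ x ∈ Sᶜ, ((S.filter fun y => G.Adj x y).card : ℝ) = a - lmin ∧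
                  ((Sᶜ.filter fun y => G.Adj x y).card : ℝ) = (r : ℝ) + lmin - a))) :=
  hoffman_type_bound_average_internal_degree_general G r hreg hedge lmin hleast S hS a hsigma
end

section
/- Let G be an r-regular finite simple graph with at least one edge, let λ_min be the minimum eigenvalue of its adjacency matrix, and suppose k = (λ_min − r)/λ_min is a positive integer. Let f : V → {1,…,k} be a proper vertex coloring of G (adjacent vertices get distinct colors) in which every color class C_i = f⁻¹(i) is nonempty. Then f is a perfect k-coloring: there exist integers q_{ij} (1 ≤ i,j ≤ k) such that every vertex of color i has exactly q_{ij} neighbors of color j, and q_{ii} = 0 for all i. -/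
open Finset
open scoped Classical
open scoped Matrix

/-!
Let `λ = lmin` and, for each colour `j`, let `u j = k • 𝟙_{f⁻¹ j} - 1`. Since `λ` is the least
eigenvalue, `A - λ • 1` is positive semidefinite, so `∑ j, u j ⬝ᵥ (A - λ • 1) *ᵥ u j ≥ 0`, with
equality only if every `u j` is a `λ`-eigenvector. Properness and regularity make that sum equal to
`-n k (r + λ (k - 1))`, which vanishes exactly when `k = (λ - r) / λ` (Hoffman's bound is tight).
Reading off `A *ᵥ u j = λ • u j` at a vertex `x` shows that `x` has no neighbour of its own colour
and exactly `-λ` neighbours of every other colour.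
-/

namespace Matrix

variable {n : Type*} [Fintype n]

theorem IsHermitian.posSemidef_sub_smul_one {A : Matrix n n ℝ} (hA : A.IsHermitian) {c : ℝ}
    (hc : ∀ μ : ℝ, (∃ g : n → ℝ, g ≠ 0 ∧ A *ᵥ g = μ • g) → c ≤ μ) :
    (A - c • 1).PosSemidef := by
  have hB : (A - c • 1).IsHermitian := hA.sub (isHermitian_one.smul (IsSelfAdjoint.all c))
  refine hB.posSemidef_iff_eigenvalues_nonneg.mpr fun i => ?_
  set v : n → ℝ := (hB.eigenvectorBasis i).ofLp
  have hv : v ≠ 0 := by simpa [v] using hB.eigenvectorBasis.orthonormal.ne_zero i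
  have hAv : A *ᵥ v = (hB.eigenvalues i + c) • v := by
    have h := hB.mulVec_eigenvectorBasis i
    rw [sub_mulVec, smul_mulVec, one_mulVec, sub_eq_iff_eq_add] at h
    rw [add_smul, ← h]
  have := hc _ ⟨v, hv, hAv⟩
  show (0 : ℝ) ≤ hB.eigenvalues i
  linarith

theorem PosSemidef.mulVec_eq_zero_of_sum_dotProduct_mulVec_eq_zero {ι : Type*} [Fintype ι]
    {B : Matrix n n ℝ} (hB : B.PosSemidef) {u : ι → n → ℝ}
    (hsum : ∑ i, u i ⬝ᵥ (B *ᵥ u i) = 0) (i : ι) : B *ᵥ u i = 0 := by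
  have hnonneg : ∀ i ∈ univ, 0 ≤ u i ⬝ᵥ (B *ᵥ u i) := fun i _ => by
    simpa using hB.dotProduct_mulVec_nonneg (u i)
  have hi := (sum_eq_zero_iff_of_nonneg hnonneg).mp hsum i (mem_univ i)
  exact (hB.dotProduct_mulVec_zero_iff (u i)).mp (by simpa using hi)

end Matrix

namespace SimpleGraph

variable {V : Type*} {k : ℕ}

def centeredColorVector (f : V → Fin k) (j : Fin k) (x : V) : ℝ :=
  k * (if f x = j then 1 else 0) - 1

theorem sum_centeredColorVector_mul (f : V → Fin k) (x y : V) :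
    ∑ j, centeredColorVector f j x * centeredColorVector f j y
      = k * ((if f x = f y then (k : ℝ) else 0) - 1) := by
  simp only [centeredColorVector]
  by_cases h : f x = f y <;>
    simp [mul_sub, sub_mul, sum_sub_distrib, mul_ite, ite_mul, h, eq_comm]

variable [Fintype V]

theorem sum_dotProduct_centeredColorVector_self (f : V → Fin k) :
    ∑ j, centeredColorVector f j ⬝ᵥ centeredColorVector f j
      = Fintype.card V * (k * (k - 1)) := by
  simp only [dotProduct]
  rw [sum_comm]
  simp [sum_centeredColorVector_mul, mul_sub]

variable (G : SimpleGraph V) [DecidableRel G.Adj] {r : ℕ}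

theorem adjMatrix_mulVec_centeredColorVector (hreg : G.IsRegularOfDegree r) (f : V → Fin k)
    (j : Fin k) (x : V) :
    (G.adjMatrix ℝ *ᵥ centeredColorVector f j) x
      = k * #{y | G.Adj x y ∧ f y = j} - r := by
  have hfilter : ({y ∈ G.neighborFinset x | f y = j} : Finset V)
      = ({y | G.Adj x y ∧ f y = j} : Finset V) := by
    ext y; simp
  rw [adjMatrix_mulVec_apply]
  simp only [centeredColorVector]
  rw [sum_sub_distrib, ← mul_sum, sum_boole, hfilter, sum_const, card_neighborFinset_eq_degree,
    hreg x, nsmul_eq_mul, mul_one]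

theorem sum_dotProduct_adjMatrix_mulVec_centeredColorVector (hreg : G.IsRegularOfDegree r)
    {f : V → Fin k} (hproper : ∀ x y, G.Adj x y → f x ≠ f y) :
    ∑ j, centeredColorVector f j ⬝ᵥ (G.adjMatrix ℝ *ᵥ centeredColorVector f j)
      = -(Fintype.card V * r * k) := by
  have hvertex : ∀ x, ∑ j, centeredColorVector f j x *
      (G.adjMatrix ℝ *ᵥ centeredColorVector f j) x = -(r * k) := fun x => by
    simp only [adjMatrix_mulVec_apply, mul_sum]
    rw [sum_comm]
    have hneighbor : ∀ y ∈ G.neighborFinset x,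
        ∑ j, centeredColorVector f j x * centeredColorVector f j y = -k := fun y hy => by
      rw [sum_centeredColorVector_mul, if_neg (hproper x y ((mem_neighborFinset G x y).mp hy))]
      ring
    rw [sum_congr rfl hneighbor, sum_const, card_neighborFinset_eq_degree, hreg x, nsmul_eq_mul]
    ring
  simp only [dotProduct]
  rw [sum_comm, sum_congr rfl fun x _ => hvertex x, sum_const, card_univ, nsmul_eq_mul]
  ring

variable {lmin : ℝ}

theorem adjMatrix_mulVec_centeredColorVector_eq_smul (hreg : G.IsRegularOfDegree r)
    (hleast : ∀ μ : ℝ,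
      (∃ g : V → ℝ, g ≠ 0 ∧ G.adjMatrix ℝ *ᵥ g = μ • g) → lmin ≤ μ)
    (htight : lmin * (k - 1) = -r) {f : V → Fin k} (hproper : ∀ x y, G.Adj x y → f x ≠ f y)
    (j : Fin k) :
    G.adjMatrix ℝ *ᵥ centeredColorVector f j = lmin • centeredColorVector f j := by
  have hPSD := (isHermitian_adjMatrix ℝ G).posSemidef_sub_smul_one hleast
  have hsum : ∑ j, centeredColorVector f j ⬝ᵥ
      ((G.adjMatrix ℝ - lmin • 1) *ᵥ centeredColorVector f j) = 0 := by
    simp only [Matrix.sub_mulVec, Matrix.smul_mulVec, Matrix.one_mulVec, dotProduct_sub,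
      dotProduct_smul, smul_eq_mul, sum_sub_distrib, ← mul_sum]
    rw [sum_dotProduct_adjMatrix_mulVec_centeredColorVector G hreg hproper,
      sum_dotProduct_centeredColorVector_self]
    linear_combination (-(Fintype.card V : ℝ) * k) * htight
  have h := hPSD.mulVec_eq_zero_of_sum_dotProduct_mulVec_eq_zero hsum j
  rwa [Matrix.sub_mulVec, Matrix.smul_mulVec, Matrix.one_mulVec, sub_eq_zero] at h

theorem card_filter_adj_color_eq (hreg : G.IsRegularOfDegree r)
    (hleast : ∀ μ : ℝ,
      (∃ g : V → ℝ, g ≠ 0 ∧ G.adjMatrix ℝ *ᵥ g = μ • g) → lmin ≤ μ)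
    (hk : (k : ℝ) ≠ 0) (htight : lmin * (k - 1) = -r) {f : V → Fin k}
    (hproper : ∀ x y, G.Adj x y → f x ≠ f y) (x : V) (j : Fin k) :
    (#{y | G.Adj x y ∧ f y = j} : ℝ) = if f x = j then 0 else -lmin := by
  have h := congrFun (G.adjMatrix_mulVec_centeredColorVector_eq_smul hreg hleast htight hproper j) x
  rw [adjMatrix_mulVec_centeredColorVector G hreg, Pi.smul_apply, smul_eq_mul,
    centeredColorVector] at h
  apply mul_left_cancel₀ hk
  split_ifs at h ⊢ <;> linear_combination h + htight

end SimpleGraph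

theorem proper_coloring_is_perfect_of_hoffman_chromatic_general
    {V : Type*} [Fintype V] (G : SimpleGraph V) [DecidableRel G.Adj]
    (r : ℕ) (hreg : G.IsRegularOfDegree r)
    (lmin : ℝ)
    (hleast : ∀ μ : ℝ,
      (∃ g : V → ℝ, g ≠ 0 ∧ (G.adjMatrix ℝ).mulVec g = μ • g) → lmin ≤ μ)
    (k : ℕ) (hk : 0 < k) (hkval : (k : ℝ) = (lmin - (r : ℝ)) / lmin)
    (f : V → Fin k)
    (hproper : ∀ x y, G.Adj x y → f x ≠ f y) :
    ∃ q : Fin k → Fin k → ℕ,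
      (∀ i, q i i = 0) ∧
      ∀ x : V, ∀ j : Fin k,
        (univ.filter fun y => G.Adj x y ∧ f y = j).card = q (f x) j := by
  have hk0 : (k : ℝ) ≠ 0 := by positivity
  have hlmin : lmin ≠ 0 := by
    rintro rfl
    exact hk0 (by simpa using hkval)
  have htight : lmin * (k - 1) = -r := by
    rw [hkval]
    field_simp
    ring
  refine ⟨fun i j => if i = j then 0 else ⌊-lmin⌋₊, fun i => if_pos rfl, fun x j => ?_⟩
  have hcard := G.card_filter_adj_color_eq hreg hleast hk0 htight hproper x j
  dsimp only
  split_ifs at hcard ⊢ with hxj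
  · exact_mod_cast hcard
  · rw [← hcard, Nat.floor_natCast]

/-- A proper k-coloring of an r-regular graph with `k = (λ_min - r)/λ_min`
colors, all of whose color classes are nonempty, is a perfect k-coloring. -/
theorem proper_coloring_is_perfect_of_hoffman_chromatic
    {V : Type*} [Fintype V] (G : SimpleGraph V) [DecidableRel G.Adj]
    (r : ℕ) (hreg : G.IsRegularOfDegree r)
    (hedge : ∃ x y, G.Adj x y)
    (lmin : ℝ)
    (hmin : ∃ g : V → ℝ, g ≠ 0 ∧ (G.adjMatrix ℝ).mulVec g = lmin • g)
    (hleast : ∀ μ : ℝ,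
      (∃ g : V → ℝ, g ≠ 0 ∧ (G.adjMatrix ℝ).mulVec g = μ • g) → lmin ≤ μ)
    (k : ℕ) (hk : 0 < k) (hkval : (k : ℝ) = (lmin - (r : ℝ)) / lmin)
    (f : V → Fin k)
    (hproper : ∀ x y, G.Adj x y → f x ≠ f y)
    (hclasses : ∀ i : Fin k, ∃ x, f x = i) :
    ∃ q : Fin k → Fin k → ℕ,
      (∀ i, q i i = 0) ∧
      ∀ x : V, ∀ j : Fin k,
        (univ.filter fun y => G.Adj x y ∧ f y = j).card = q (f x) j :=
  proper_coloring_is_perfect_of_hoffman_chromatic_general G r hreg lmin hleast k hk hkval f hproper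
end

section
/- (Expander Mixing Lemma, inequality part.) Let G be a connected r-regular finite simple graph on n ≥ 2 vertices, and let λ be a second-maximum-modulus eigenvalue of G: λ is an eigenvalue of the adjacency matrix M, λ ≠ r, and |μ| ≤ |λ| for every eigenvalue μ of M with μ ≠ r. Then for all subsets A, B ⊆ V: |e(A,B) − r|A||B|/n| ≤ |λ|·√(|A|·|B|·(1 − |A|/n)·(1 − |B|/n)). -/
/-!
Let `a`, `b` be the indicator vectors of `A`, `B` with their means subtracted. Regularity gives
`e(A,B) - r|A||B|/n = ⟪a, M b⟫` and `‖a‖² = |A|(1 - |A|/n)`. By connectedness the `r`-eigenspace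
of `M` consists of the constants, to which `b` is orthogonal, so expanding `b` in an orthonormal
eigenbasis gives `‖M b‖ ≤ |λ| ‖b‖`; Cauchy–Schwarz concludes.
-/

open Finset Matrix
open scoped Classical

theorem Finset.indicator_one_dotProduct {V : Type*} [Fintype V] (S : Finset V) (f : V → ℝ) :
    (S : Set V).indicator 1 ⬝ᵥ f = ∑ v ∈ S, f v := by
  simp [dotProduct, Set.indicator_apply, Finset.sum_ite_mem]

namespace Matrix

variable {n : Type*} [Fintype n]

theorem dotProduct_sq_le_dotProduct_self_mul (a b : n → ℝ) :
    (a ⬝ᵥ b) ^ 2 ≤ (a ⬝ᵥ a) * (b ⬝ᵥ b) := by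
  simpa only [dotProduct, sq] using sum_mul_sq_le_sq_mul_sq univ a b

theorem sum_sq_dotProduct_orthonormalBasis (u : OrthonormalBasis n ℝ (EuclideanSpace ℝ n))
    (x : n → ℝ) : ∑ i, (x ⬝ᵥ u i) ^ 2 = x ⬝ᵥ x := by
  have := u.sum_sq_inner_right (WithLp.toLp 2 x)
  rw [← real_inner_self_eq_norm_sq, EuclideanSpace.inner_toLp_toLp] at this
  simpa [EuclideanSpace.inner_eq_star_dotProduct] using this

variable [DecidableEq n] {M : Matrix n n ℝ} {r c : ℝ} {x : n → ℝ}

theorem IsHermitian.mulVec_dotProduct_mulVec_le (hM : M.IsHermitian)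
    (hc : ∀ μ : ℝ, (∃ g : n → ℝ, g ≠ 0 ∧ M *ᵥ g = μ • g) → μ ≠ r → |μ| ≤ |c|)
    (hx : ∀ g : n → ℝ, M *ᵥ g = r • g → g ⬝ᵥ x = 0) :
    (M *ᵥ x) ⬝ᵥ (M *ᵥ x) ≤ c ^ 2 * (x ⬝ᵥ x) := by
  set u := hM.eigenvectorBasis
  set μ := hM.eigenvalues
  have coeff : ∀ i, (M *ᵥ x) ⬝ᵥ u i = μ i * (x ⬝ᵥ u i) := fun i => by
    rw [dotProduct_comm, dotProduct_mulVec, ← mulVec_transpose, (isHermitian_iff_isSymm.mp hM).eq,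
      hM.mulVec_eigenvectorBasis, smul_dotProduct, smul_eq_mul, dotProduct_comm]
  have term : ∀ i, (μ i * (x ⬝ᵥ u i)) ^ 2 ≤ c ^ 2 * (x ⬝ᵥ u i) ^ 2 := fun i => by
    by_cases hr : μ i = r
    · have : x ⬝ᵥ u i = 0 := by
        rw [dotProduct_comm]
        exact hx _ (hr ▸ hM.mulVec_eigenvectorBasis i)
      simp [this]
    · have hne : (⇑(u i) : n → ℝ) ≠ 0 := fun h0 =>
        u.orthonormal.ne_zero i (by simpa using congrArg (WithLp.toLp 2) h0)
      rw [mul_pow]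
      exact mul_le_mul_of_nonneg_right
        (sq_le_sq.mpr (hc _ ⟨u i, hne, hM.mulVec_eigenvectorBasis i⟩ hr)) (sq_nonneg _)
  calc (M *ᵥ x) ⬝ᵥ (M *ᵥ x) = ∑ i, ((M *ᵥ x) ⬝ᵥ u i) ^ 2 :=
        (sum_sq_dotProduct_orthonormalBasis u _).symm
    _ = ∑ i, (μ i * (x ⬝ᵥ u i)) ^ 2 := by simp_rw [coeff]
    _ ≤ ∑ i, c ^ 2 * (x ⬝ᵥ u i) ^ 2 := sum_le_sum fun i _ => term i
    _ = c ^ 2 * (x ⬝ᵥ x) := by rw [← mul_sum, sum_sq_dotProduct_orthonormalBasis]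

theorem IsHermitian.dotProduct_mulVec_sq_le (hM : M.IsHermitian)
    (hc : ∀ μ : ℝ, (∃ g : n → ℝ, g ≠ 0 ∧ M *ᵥ g = μ • g) → μ ≠ r → |μ| ≤ |c|)
    (hx : ∀ g : n → ℝ, M *ᵥ g = r • g → g ⬝ᵥ x = 0) (y : n → ℝ) :
    (y ⬝ᵥ (M *ᵥ x)) ^ 2 ≤ c ^ 2 * (y ⬝ᵥ y) * (x ⬝ᵥ x) := by
  have hy : 0 ≤ y ⬝ᵥ y := sum_nonneg fun i _ => mul_self_nonneg (y i)
  calc (y ⬝ᵥ (M *ᵥ x)) ^ 2 ≤ (y ⬝ᵥ y) * ((M *ᵥ x) ⬝ᵥ (M *ᵥ x)) :=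
        dotProduct_sq_le_dotProduct_self_mul _ _
    _ ≤ (y ⬝ᵥ y) * (c ^ 2 * (x ⬝ᵥ x)) :=
        mul_le_mul_of_nonneg_left (hM.mulVec_dotProduct_mulVec_le hc hx) hy
    _ = c ^ 2 * (y ⬝ᵥ y) * (x ⬝ᵥ x) := by ring

end Matrix

section CenteredIndicator

variable {V : Type*} [Fintype V]

noncomputable def Finset.centeredIndicator (S : Finset V) : V → ℝ :=
  (S : Set V).indicator 1 - ((#S : ℝ) / Fintype.card V) • 1

variable [Nonempty V] (S : Finset V)

theorem Finset.one_dotProduct_centeredIndicator : 1 ⬝ᵥ S.centeredIndicator = 0 := by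
  rw [centeredIndicator, dotProduct_sub, dotProduct_smul, one_dotProduct_one, dotProduct_comm,
    indicator_one_dotProduct]
  simp

theorem Finset.centeredIndicator_dotProduct_self :
    S.centeredIndicator ⬝ᵥ S.centeredIndicator = #S * (1 - #S / Fintype.card V) := by
  calc S.centeredIndicator ⬝ᵥ S.centeredIndicator
      = ∑ v ∈ S, S.centeredIndicator v := by
        rw [centeredIndicator, sub_dotProduct, smul_dotProduct, ← centeredIndicator,
          one_dotProduct_centeredIndicator, indicator_one_dotProduct, smul_zero, sub_zero]
    _ = ∑ _v ∈ S, (1 - #S / Fintype.card V : ℝ) :=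
        sum_congr rfl fun v hv => by simp [centeredIndicator, hv]
    _ = #S * (1 - #S / Fintype.card V) := by rw [sum_const, nsmul_eq_mul]

end CenteredIndicator

namespace SimpleGraph

variable {V : Type*} [Fintype V] {G : SimpleGraph V} [DecidableRel G.Adj] {r : ℕ}

theorem IsRegularOfDegree.adjMatrix_mulVec_one_s5 (hreg : G.IsRegularOfDegree r) :
    G.adjMatrix ℝ *ᵥ 1 = (r : ℝ) • 1 := by
  ext v
  simpa using adjMatrix_mulVec_const_apply_of_regular (a := (1 : ℝ)) hreg (v := v)

theorem IsRegularOfDegree.lapMatrix_mulVec (hreg : G.IsRegularOfDegree r) (g : V → ℝ) :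
    G.lapMatrix ℝ *ᵥ g = (r : ℝ) • g - G.adjMatrix ℝ *ᵥ g := by
  ext v
  simp [lapMatrix, sub_mulVec, degMatrix_mulVec_apply, hreg v]

theorem Connected.eq_smul_one_of_adjMatrix_mulVec_eq (hconn : G.Connected)
    (hreg : G.IsRegularOfDegree r) {g : V → ℝ} (hg : G.adjMatrix ℝ *ᵥ g = (r : ℝ) • g) (v : V) :
    g = g v • 1 := by
  have hlap : G.lapMatrix ℝ *ᵥ g = 0 := by rw [hreg.lapMatrix_mulVec, hg, sub_self]
  ext w
  simpa using (lapMatrix_mulVec_eq_zero_iff_forall_reachable G).mp hlap w v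
    (hconn.preconnected w v)

theorem adjMatrix_mulVec_indicator_one_apply (B : Finset V) (x : V) :
    (G.adjMatrix ℝ *ᵥ (B : Set V).indicator 1) x = #{y ∈ B | G.Adj x y} := by
  rw [mulVec, dotProduct_comm, Finset.indicator_one_dotProduct]
  simp [adjMatrix_apply, Finset.sum_boole]

theorem IsRegularOfDegree.centeredIndicator_dotProduct_adjMatrix_mulVec [Nonempty V]
    (hreg : G.IsRegularOfDegree r) (A B : Finset V) :
    A.centeredIndicator ⬝ᵥ (G.adjMatrix ℝ *ᵥ B.centeredIndicator) =
      ∑ x ∈ A, (#{y ∈ B | G.Adj x y} : ℝ) - r * #A * #B / Fintype.card V := by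
  have hsymm : 1 ⬝ᵥ (G.adjMatrix ℝ *ᵥ (B : Set V).indicator 1) = r * #B := by
    rw [dotProduct_mulVec, ← mulVec_transpose, G.isSymm_adjMatrix.eq, hreg.adjMatrix_mulVec_one_s5,
      smul_dotProduct, dotProduct_comm, indicator_one_dotProduct]
    simp
  have hA := A.one_dotProduct_centeredIndicator
  rw [dotProduct_comm] at hA
  calc A.centeredIndicator ⬝ᵥ (G.adjMatrix ℝ *ᵥ B.centeredIndicator)
      = A.centeredIndicator ⬝ᵥ (G.adjMatrix ℝ *ᵥ (B : Set V).indicator 1) := by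
        rw [centeredIndicator.eq_1 B, mulVec_sub, mulVec_smul, hreg.adjMatrix_mulVec_one_s5,
          dotProduct_sub, dotProduct_smul, dotProduct_smul, hA, smul_zero, smul_zero, sub_zero]
    _ = ∑ x ∈ A, (#{y ∈ B | G.Adj x y} : ℝ) - #A / Fintype.card V * (r * #B) := by
        rw [centeredIndicator, sub_dotProduct, smul_dotProduct, hsymm, indicator_one_dotProduct,
          smul_eq_mul]
        simp_rw [adjMatrix_mulVec_indicator_one_apply]
    _ = ∑ x ∈ A, (#{y ∈ B | G.Adj x y} : ℝ) - r * #A * #B / Fintype.card V := by ring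

end SimpleGraph

theorem expander_mixing_lemma_inequality_general
    {V : Type*} [Fintype V] (G : SimpleGraph V) [DecidableRel G.Adj]
    (r : ℕ) (hconn : G.Connected) (hreg : G.IsRegularOfDegree r)
    (lam : ℝ)
    (hmax : ∀ μ : ℝ,
      (∃ g : V → ℝ, g ≠ 0 ∧ (G.adjMatrix ℝ).mulVec g = μ • g) →
      μ ≠ (r : ℝ) → |μ| ≤ |lam|)
    (A B : Finset V) :
    |(∑ x ∈ A, ((B.filter fun y => G.Adj x y).card : ℝ))
        - (r : ℝ) * A.card * B.card / Fintype.card V| ≤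
      |lam| * Real.sqrt ((A.card : ℝ) * B.card
        * (1 - (A.card : ℝ) / Fintype.card V)
        * (1 - (B.card : ℝ) / Fintype.card V)) := by
  haveI : Nonempty V := hconn.nonempty
  have hB : ∀ g : V → ℝ, G.adjMatrix ℝ *ᵥ g = (r : ℝ) • g → g ⬝ᵥ B.centeredIndicator = 0 :=
    fun g hg => by
      rw [hconn.eq_smul_one_of_adjMatrix_mulVec_eq hreg hg (Classical.arbitrary V), smul_dotProduct,
        B.one_dotProduct_centeredIndicator, smul_zero]
  have key := (G.isHermitian_adjMatrix ℝ).dotProduct_mulVec_sq_le hmax hB A.centeredIndicator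
  rw [hreg.centeredIndicator_dotProduct_adjMatrix_mulVec, A.centeredIndicator_dotProduct_self,
    B.centeredIndicator_dotProduct_self] at key
  rw [← Real.sqrt_sq_eq_abs lam, ← Real.sqrt_mul (sq_nonneg lam)]
  exact Real.abs_le_sqrt (key.trans_eq (by ring))

/-- Expander Mixing Lemma, inequality part. -/
theorem expander_mixing_lemma_inequality
    {V : Type*} [Fintype V] (G : SimpleGraph V) [DecidableRel G.Adj]
    (r : ℕ) (hconn : G.Connected) (hreg : G.IsRegularOfDegree r)
    (hn : 2 ≤ Fintype.card V)
    (lam : ℝ)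
    (heig : ∃ g : V → ℝ, g ≠ 0 ∧ (G.adjMatrix ℝ).mulVec g = lam • g)
    (hne : lam ≠ (r : ℝ))
    (hmax : ∀ μ : ℝ,
      (∃ g : V → ℝ, g ≠ 0 ∧ (G.adjMatrix ℝ).mulVec g = μ • g) →
      μ ≠ (r : ℝ) → |μ| ≤ |lam|)
    (A B : Finset V) :
    |(∑ x ∈ A, ((B.filter fun y => G.Adj x y).card : ℝ))
        - (r : ℝ) * A.card * B.card / Fintype.card V| ≤
      |lam| * Real.sqrt ((A.card : ℝ) * B.card
        * (1 - (A.card : ℝ) / Fintype.card V)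
        * (1 - (B.card : ℝ) / Fintype.card V)) :=
  expander_mixing_lemma_inequality_general G r hconn hreg lam hmax A B
end

section
/- Let G be an amply regular finite simple graph on n vertices with polynomial p(t) = p₂t² + p₁t + p₀ (so M₂(G) = p₂M² + p₁M + p₀I with p₂ ≠ 0, and G is r-regular with r = −p₀/p₂). Suppose {C, V∖C} is an equitable partition with quotient matrix ((a, b),(c, d)) where b = r − a > 0 and c = r − d > 0, and set β = σ₂(C) = p₂(a² + bc) + p₁a + p₀. Then |C| = (β − p(a))·n/(p₂(r−a)² + β − p(a)). -/
open Finset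
open scoped Classical

/-- Cardinality formula for a part of an equitable partition of an amply
regular graph: with `β = p₂(a² + bc) + p₁a + p₀`,
`|C| = (β - p(a))·n/(p₂(r-a)² + β - p(a))`. -/
theorem card_of_equitable_part_amply_regular
    {V : Type*} [Fintype V] (G : SimpleGraph V) [DecidableRel G.Adj]
    (p0 p1 p2 : ℝ) (hp2 : p2 ≠ 0)
    (hM2 : (Matrix.of fun x y : V => if G.dist x y = 2 then (1 : ℝ) else 0)
      = p2 • (G.adjMatrix ℝ * G.adjMatrix ℝ) + p1 • G.adjMatrix ℝ + p0 • (1 : Matrix V V ℝ))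
    (r : ℕ) (hreg : G.IsRegularOfDegree r) (hr : (r : ℝ) = -p0 / p2)
    (C : Finset V) (hC : C.Nonempty) (hCc : Cᶜ.Nonempty)
    (a b c d : ℝ) (hb : b = (r : ℝ) - a) (hb0 : 0 < b)
    (hc : c = (r : ℝ) - d) (hc0 : 0 < c)
    (hequit1 : ∀ x ∈ C, ((C.filter fun y => G.Adj x y).card : ℝ) = a ∧
                        ((Cᶜ.filter fun y => G.Adj x y).card : ℝ) = b)
    (hequit2 : ∀ x ∈ Cᶜ, ((C.filter fun y => G.Adj x y).card : ℝ) = c ∧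
                         ((Cᶜ.filter fun y => G.Adj x y).card : ℝ) = d)
    (beta : ℝ) (hbeta : beta = p2 * (a ^ 2 + b * c) + p1 * a + p0) :
    (C.card : ℝ) = (beta - (p2 * a ^ 2 + p1 * a + p0)) * Fintype.card V
      / (p2 * ((r : ℝ) - a) ^ 2 + beta - (p2 * a ^ 2 + p1 * a + p0)) := by
  have hnat : ∑ x ∈ C, (Cᶜ.filter fun y => G.Adj x y).card
      = ∑ y ∈ Cᶜ, (C.filter fun x => G.Adj y x).card := by
    simp_rw [Finset.card_filter]
    rw [Finset.sum_comm]
    refine Finset.sum_congr rfl fun y _ => Finset.sum_congr rfl fun x _ => ?_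
    simp [SimpleGraph.adj_comm]
  have h1 : ∑ x ∈ C, ((Cᶜ.filter fun y => G.Adj x y).card : ℝ) = C.card * b := by
    rw [Finset.sum_congr rfl fun x hx => (hequit1 x hx).2, Finset.sum_const,
      nsmul_eq_mul]
  have h2 : ∑ y ∈ Cᶜ, ((C.filter fun x => G.Adj y x).card : ℝ) = Cᶜ.card * c := by
    rw [Finset.sum_congr rfl fun y hy => (hequit2 y hy).1, Finset.sum_const,
      nsmul_eq_mul]
  have key : (C.card : ℝ) * b = (Cᶜ.card : ℝ) * c := by
    rw [← h1, ← h2, ← Nat.cast_sum, ← Nat.cast_sum, hnat]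
  have hn : (Cᶜ.card : ℝ) = (Fintype.card V : ℝ) - C.card := by
    have h := Finset.card_add_card_compl C
    have h' : (C.card : ℝ) + Cᶜ.card = Fintype.card V := by exact_mod_cast congrArg Nat.cast h
    linarith
  rw [hn] at key
  have hbc : (0:ℝ) < b + c := by linarith
  have hβ : beta - (p2 * a ^ 2 + p1 * a + p0) = p2 * (b * c) := by rw [hbeta]; ring
  have hden : p2 * ((r : ℝ) - a) ^ 2 + beta - (p2 * a ^ 2 + p1 * a + p0)
      = p2 * b * (b + c) := by rw [hbeta, hb]; ring
  rw [hden, hβ]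
  have hne : p2 * b * (b + c) ≠ 0 :=
    mul_ne_zero (mul_ne_zero hp2 (ne_of_gt hb0)) (ne_of_gt hbc)
  rw [eq_div_iff hne]
  linear_combination p2 * b * key
end

section
/- Let G be an amply regular finite simple graph on vertex set V with polynomial p(t) = p₂t² + p₁t + p₀ where p₂ > 0 (so M₂(G) = p₂M² + p₁M + p₀I, and G is r-regular with r = −p₀/p₂). Let C ⊆ V be nonempty and let a, β be real numbers with a < r and β ≥ p(a). If σ(C) = a and σ₂(C) ≤ β, then |C| ≤ (β − p(a))·|V|/(p₂(r−a)² + β − p(a)). Moreover, if |C| = (β − p(a))·|V|/(p₂(r−a)² + β − p(a)) and V∖C is nonempty, then {C, V∖C} is an equitable partition of V. -/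
open Finset
open scoped Classical

/-- Upper bound on the size of a set `C` in an amply regular graph with fixed
average internal degree `a` and `σ₂(C) ≤ β`; equality forces an equitable
partition. -/
theorem card_bound_amply_regular
    {V : Type*} [Fintype V] (G : SimpleGraph V) [DecidableRel G.Adj]
    (p0 p1 p2 : ℝ) (hp2 : 0 < p2)
    (hM2 : (Matrix.of fun x y : V => if G.dist x y = 2 then (1 : ℝ) else 0)
      = p2 • (G.adjMatrix ℝ * G.adjMatrix ℝ) + p1 • G.adjMatrix ℝ + p0 • (1 : Matrix V V ℝ))
    (r : ℕ) (hreg : G.IsRegularOfDegree r) (hr : (r : ℝ) = -p0 / p2)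
    (C : Finset V) (hC : C.Nonempty)
    (a beta : ℝ) (ha : a < (r : ℝ)) (hbeta : p2 * a ^ 2 + p1 * a + p0 ≤ beta)
    (hsigma : (∑ x ∈ C, ((C.filter fun y => G.Adj x y).card : ℝ)) / C.card = a)
    (hsigma2 : (∑ x ∈ C, ((C.filter fun y => G.dist x y = 2).card : ℝ)) / C.card ≤ beta) :
    (C.card : ℝ) ≤ (beta - (p2 * a ^ 2 + p1 * a + p0)) * Fintype.card V
      / (p2 * ((r : ℝ) - a) ^ 2 + beta - (p2 * a ^ 2 + p1 * a + p0)) ∧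
    ((C.card : ℝ) = (beta - (p2 * a ^ 2 + p1 * a + p0)) * Fintype.card V
      / (p2 * ((r : ℝ) - a) ^ 2 + beta - (p2 * a ^ 2 + p1 * a + p0)) →
      Cᶜ.Nonempty →
      ∃ q11 q12 q21 q22 : ℝ,
        (∀ x ∈ C, ((C.filter fun y => G.Adj x y).card : ℝ) = q11 ∧
                  ((Cᶜ.filter fun y => G.Adj x y).card : ℝ) = q12) ∧
        (∀ x ∈ Cᶜ, ((C.filter fun y => G.Adj x y).card : ℝ) = q21 ∧
                   ((Cᶜ.filter fun y => G.Adj x y).card : ℝ) = q22)) := by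
  classical
  set R : ℝ := (r : ℝ) with hR
  have hc0 : (0 : ℝ) < (C.card : ℝ) := by exact_mod_cast Finset.card_pos.mpr hC
  set c : ℝ := (C.card : ℝ) with hcdef
  set n : ℝ := (Fintype.card V : ℝ) with hndef
  set d : V → ℝ := fun x => ∑ y ∈ C, if G.Adj x y then (1 : ℝ) else 0 with hddef
  have hdC : ∀ x : V, ((C.filter fun y => G.Adj x y).card : ℝ) = d x := by
    intro x
    rw [hddef, Finset.card_filter]
    push_cast
    simp
  -- column sums
  have hcol : ∀ z : V, ∑ x ∈ C, (if G.Adj x z then (1 : ℝ) else 0) = d z := by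
    intro z
    rw [hddef]
    exact Finset.sum_congr rfl fun x _ => if_congr (G.adj_comm x z) rfl rfl
  -- Fact A
  have hA : ∑ x ∈ C, d x = a * c := by
    rw [div_eq_iff hc0.ne'] at hsigma
    calc ∑ x ∈ C, d x = ∑ x ∈ C, ((C.filter fun y => G.Adj x y).card : ℝ) :=
          Finset.sum_congr rfl fun x _ => (hdC x).symm
      _ = a * c := hsigma
  -- Fact B
  have hB : ∑ x : V, d x = R * c := by
    rw [hddef]
    rw [Finset.sum_comm]
    have hrow : ∀ y ∈ C, ∑ x : V, (if G.Adj x y then (1 : ℝ) else 0) = R := by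
      intro y _
      rw [Finset.sum_congr rfl fun x _ => if_congr (G.adj_comm x y) rfl rfl]
      rw [Finset.sum_boole, ← SimpleGraph.neighborFinset_eq_filter, ← SimpleGraph.degree, hreg y]
    rw [Finset.sum_congr rfl hrow, Finset.sum_const, nsmul_eq_mul, ← hcdef, mul_comm]
  -- entrywise matrix identity
  have hentry : ∀ x y : V, (if G.dist x y = 2 then (1 : ℝ) else 0)
      = p2 * (∑ z : V, (if G.Adj x z then (1 : ℝ) else 0) * (if G.Adj z y then (1 : ℝ) else 0))
        + p1 * (if G.Adj x y then (1 : ℝ) else 0) + p0 * (if x = y then (1 : ℝ) else 0) := by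
    intro x y
    have h := congrFun (congrFun hM2 x) y
    simpa [Matrix.mul_apply, Matrix.one_apply, Matrix.add_apply, Matrix.smul_apply,
      SimpleGraph.adjMatrix_apply, smul_eq_mul] using h
  -- term1
  have hterm1 : ∑ x ∈ C, ∑ y ∈ C,
      (∑ z : V, (if G.Adj x z then (1 : ℝ) else 0) * (if G.Adj z y then (1 : ℝ) else 0))
      = ∑ z : V, d z ^ 2 := by
    have h1 : ∀ x ∈ C, (∑ y ∈ C, ∑ z : V,
        (if G.Adj x z then (1 : ℝ) else 0) * (if G.Adj z y then (1 : ℝ) else 0))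
        = ∑ z : V, (if G.Adj x z then (1 : ℝ) else 0) * d z := by
      intro x _
      rw [Finset.sum_comm]
      exact Finset.sum_congr rfl fun z _ => by rw [← Finset.mul_sum, hddef]
    rw [Finset.sum_congr rfl h1, Finset.sum_comm]
    exact Finset.sum_congr rfl fun z _ => by rw [← Finset.sum_mul, hcol z, sq]
  -- term3
  have hterm3 : ∑ x ∈ C, ∑ y ∈ C, (if x = y then (1 : ℝ) else 0) = c := by
    have h1 : ∀ x ∈ C, ∑ y ∈ C, (if x = y then (1 : ℝ) else 0) = 1 := by
      intro x hx
      rw [Finset.sum_ite_eq C x (fun _ => (1 : ℝ)), if_pos hx]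
    rw [Finset.sum_congr rfl h1, Finset.sum_const, nsmul_eq_mul, mul_one, ← hcdef]
  -- key identity
  have hkey : ∑ x ∈ C, ((C.filter fun y => G.dist x y = 2).card : ℝ)
      = p2 * (∑ z : V, d z ^ 2) + p1 * (a * c) + p0 * c := by
    have hLHS : ∑ x ∈ C, ((C.filter fun y => G.dist x y = 2).card : ℝ)
        = ∑ x ∈ C, ∑ y ∈ C, (if G.dist x y = 2 then (1 : ℝ) else 0) := by
      refine Finset.sum_congr rfl fun x _ => ?_
      rw [Finset.card_filter]; push_cast; simp
    rw [hLHS,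
      Finset.sum_congr rfl fun x _ => Finset.sum_congr rfl fun y _ => hentry x y]
    simp only [Finset.sum_add_distrib, ← Finset.mul_sum]
    rw [hterm1, hterm3]
    have : ∑ x ∈ C, ∑ y ∈ C, (if G.Adj x y then (1 : ℝ) else 0) = a * c := hA
    rw [this]
  -- main inequality
  have hmain : p2 * (∑ z : V, d z ^ 2) + p1 * (a * c) + p0 * c ≤ beta * c := by
    rw [div_le_iff₀ hc0] at hsigma2
    rw [← hkey]; exact hsigma2
  -- c < n
  have hcn : c < n := by
    have hne : C ≠ univ := by
      intro h
      have h1 : ∑ x ∈ C, d x = ∑ x : V, d x := by rw [h]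
      rw [hA, hB] at h1
      have : a = R := mul_right_cancel₀ hc0.ne' h1
      rw [this] at ha; exact lt_irrefl _ ha
    have : C.card < Fintype.card V := by
      rw [← Finset.card_univ]
      exact Finset.card_lt_card (Finset.ssubset_univ_iff.mpr hne)
    rw [hcdef, hndef]
    exact_mod_cast this
  have hm : (0 : ℝ) < n - c := by linarith
  set m : ℝ := n - c with hmdef
  have hmcard : ((Cᶜ.card : ℝ)) = m := by
    rw [Finset.card_compl, Nat.cast_sub (Finset.card_le_univ C), hmdef, hcdef, hndef]
  -- complement sum
  have hAc : ∑ x ∈ Cᶜ, d x = (R - a) * c := by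
    have := Finset.sum_add_sum_compl C d
    rw [hA, hB] at this
    linarith only [this]
  set Q1 : ℝ := ∑ x ∈ C, (d x - a) ^ 2 with hQ1def
  set Q2 : ℝ := ∑ x ∈ Cᶜ, (m * d x - (R - a) * c) ^ 2 with hQ2def
  have hQ1nn : 0 ≤ Q1 := Finset.sum_nonneg fun _ _ => sq_nonneg _
  have hQ2nn : 0 ≤ Q2 := Finset.sum_nonneg fun _ _ => sq_nonneg _
  have hQ1eq : Q1 = (∑ x ∈ C, d x ^ 2) - a ^ 2 * c := by
    rw [hQ1def]
    have : ∀ x ∈ C, (d x - a) ^ 2 = d x ^ 2 - 2 * a * d x + a ^ 2 := fun x _ => by ring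
    rw [Finset.sum_congr rfl this, Finset.sum_add_distrib, Finset.sum_sub_distrib,
      ← Finset.mul_sum, hA, Finset.sum_const, nsmul_eq_mul, ← hcdef]
    ring
  have hQ2eq : Q2 = m ^ 2 * (∑ x ∈ Cᶜ, d x ^ 2) - m * ((R - a) * c) ^ 2 := by
    rw [hQ2def]
    have : ∀ x ∈ Cᶜ, (m * d x - (R - a) * c) ^ 2
        = m ^ 2 * d x ^ 2 - 2 * m * ((R - a) * c) * d x + ((R - a) * c) ^ 2 := fun x _ => by ring
    rw [Finset.sum_congr rfl this, Finset.sum_add_distrib, Finset.sum_sub_distrib,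
      ← Finset.mul_sum, ← Finset.mul_sum, hAc, Finset.sum_const, nsmul_eq_mul, hmcard]
    ring
  have hsplit : ∑ z : V, d z ^ 2 = (∑ x ∈ C, d x ^ 2) + ∑ x ∈ Cᶜ, d x ^ 2 :=
    (Finset.sum_add_sum_compl C _).symm
  -- master inequality with Q1 Q2
  have hmaster : p2 * m ^ 2 * Q1 + p2 * Q2 + p2 * a ^ 2 * c * m ^ 2 + p2 * m * ((R - a) * c) ^ 2
      ≤ (beta - p1 * a - p0) * c * m ^ 2 := by
    have h4 := mul_le_mul_of_nonneg_right hmain (sq_nonneg m)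
    rw [hsplit] at h4
    have e1 : p2 * m ^ 2 * Q1 = p2 * m ^ 2 * (∑ x ∈ C, d x ^ 2) - p2 * m ^ 2 * (a ^ 2 * c) := by
      rw [hQ1eq]; ring
    have e2 : p2 * Q2 = p2 * m ^ 2 * (∑ x ∈ Cᶜ, d x ^ 2) - p2 * m * ((R - a) * c) ^ 2 := by
      rw [hQ2eq]; ring
    linarith only [h4, e1, e2]
  have hD : 0 ≤ beta - (p2 * a ^ 2 + p1 * a + p0) := by linarith only [hbeta]
  have hra : 0 < R - a := by linarith only [ha]
  have hE : 0 < p2 * (R - a) ^ 2 + beta - (p2 * a ^ 2 + p1 * a + p0) := by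
    have hsq := mul_pos hp2 (pow_pos hra 2)
    linarith only [hsq, hD]
  constructor
  · rw [le_div_iff₀ hE]
    -- from hmaster drop Q1 Q2
    have h6 : p2 * m * ((R - a) * c) ^ 2 ≤ (beta - (p2 * a ^ 2 + p1 * a + p0)) * c * m ^ 2 := by
      linarith only [hmaster, mul_nonneg (mul_nonneg hp2.le (sq_nonneg m)) hQ1nn,
        mul_nonneg hp2.le hQ2nn]
    have hcm : 0 < c * m := mul_pos hc0 hm
    have h8 : p2 * (R - a) ^ 2 * c ≤ (beta - (p2 * a ^ 2 + p1 * a + p0)) * m := by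
      apply le_of_mul_le_mul_right _ hcm
      linarith only [h6]
    rw [hmdef] at h8
    linarith only [h8]
  · intro heq hcc
    rw [eq_div_iff hE.ne'] at heq
    have hzero : (beta - (p2 * a ^ 2 + p1 * a + p0)) * m - p2 * (R - a) ^ 2 * c = 0 := by
      rw [hmdef]; linarith only [heq]
    have h9 : c * m * ((beta - (p2 * a ^ 2 + p1 * a + p0)) * m - p2 * (R - a) ^ 2 * c) = 0 := by
      rw [hzero]; ring
    have hz : p2 * m ^ 2 * Q1 + p2 * Q2 ≤ 0 := by linarith only [hmaster, h9]
    have hp2m : 0 < p2 * m ^ 2 := by positivity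
    have hQ10 : Q1 = 0 := by
      have h10 : p2 * m ^ 2 * Q1 = 0 := le_antisymm (by linarith only [hz, mul_nonneg hp2.le hQ2nn])
        (mul_nonneg hp2m.le hQ1nn)
      rcases mul_eq_zero.mp h10 with h | h
      · exact absurd h hp2m.ne'
      · exact h
    have hQ20 : Q2 = 0 := by
      have h10 : p2 * Q2 = 0 := le_antisymm
        (by linarith only [hz, mul_nonneg hp2m.le hQ1nn]) (mul_nonneg hp2.le hQ2nn)
      rcases mul_eq_zero.mp h10 with h | h
      · exact absurd h hp2.ne'
      · exact h
    have hdCa : ∀ x ∈ C, d x = a := by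
      intro x hx
      have := (Finset.sum_eq_zero_iff_of_nonneg (fun i _ => sq_nonneg (d i - a))).mp hQ10 x hx
      have := sq_eq_zero_iff.mp this
      linarith only [this]
    have hdCca : ∀ x ∈ Cᶜ, d x = (R - a) * c / m := by
      intro x hx
      have := (Finset.sum_eq_zero_iff_of_nonneg
        (fun i _ => sq_nonneg (m * d i - (R - a) * c))).mp hQ20 x hx
      have h := sq_eq_zero_iff.mp this
      field_simp
      linarith only [h]
    -- degree split
    have hdeg : ∀ x : V, ((Cᶜ.filter fun y => G.Adj x y).card : ℝ) = R - d x := by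
      intro x
      have hnat : (C.filter fun y => G.Adj x y).card + (Cᶜ.filter fun y => G.Adj x y).card = r := by
        rw [← Finset.card_union_of_disjoint
          (Finset.disjoint_filter_filter (disjoint_compl_right))]
        rw [← Finset.filter_union, Finset.union_compl]
        rw [← SimpleGraph.neighborFinset_eq_filter, ← SimpleGraph.degree, hreg x]
      have : ((C.filter fun y => G.Adj x y).card : ℝ)
          + ((Cᶜ.filter fun y => G.Adj x y).card : ℝ) = R := by
        rw [hR]; exact_mod_cast congrArg (Nat.cast : ℕ → ℝ) hnat
      rw [hdC x] at this
      linarith only [this]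
    refine ⟨a, R - a, (R - a) * c / m, R - (R - a) * c / m, ?_, ?_⟩
    · intro x hx
      constructor
      · rw [hdC x]; exact hdCa x hx
      · rw [hdeg x, hdCa x hx]
    · intro x hx
      constructor
      · rw [hdC x]; exact hdCca x hx
      · rw [hdeg x, hdCca x hx]
end
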